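/- Let a_k, b_k > 0 for k = 1,...,K and define for each block C of a partition the pooled estimate p_C = (\sum_{k\in C} a_k)/(\sum_{k\in C}(a_k+b_k)). If partition C'' is obtained from C by merging blocks B_1 and B_2, then the difference in maximal pseudo-likelihoods satisfies Q*(C) - Q*(C'') = n_1 KL(p_{B_1} \| p_{B_1\cup B_2}) + n_2 KL(p_{B_2} \| p_{B_1 \cup B_2}) \geq 0, where n_j = \sum_{k \in B_j}(a_k+b_k) and KL is the Bernoulli KL divergence. -/

import Mathlib

/-- The equality-constrained parameter space associated with a partition `C` of the classes. -/
def Theta {K : ℕ} (C : Finpartition (Finset.univ : Finset (Fin K))) : Set (Fin K → ℝ) :=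
  {β | (∀ k, β k ∈ Set.Ioo (0:ℝ) 1) ∧
    ∀ t ∈ C.parts, ∀ g ∈ t, ∀ h ∈ t, β g = β h}

/-- Maximal pseudo-likelihood over the constrained parameter space of partition `C`. -/
noncomputable def Qstar {K : ℕ} (a b : Fin K → ℝ)
    (C : Finpartition (Finset.univ : Finset (Fin K))) : ℝ :=
  sSup ((fun β => ∑ k, (a k * Real.log (β k) + b k * Real.log (1 - β k))) '' Theta C)

/-- Pooled estimate of a block. -/
noncomputable def pooled {K : ℕ} (a b : Fin K → ℝ) (t : Finset (Fin K)) : ℝ :=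
  (∑ k ∈ t, a k) / (∑ k ∈ t, (a k + b k))

/-- Bernoulli Kullback–Leibler divergence. -/
noncomputable def klBer (x y : ℝ) : ℝ :=
  x * Real.log (x / y) + (1 - x) * Real.log ((1 - x) / (1 - y))

/-!
For a block `t` on which `β` takes the constant value `p`, the pseudo-likelihood contributed by
`t` is `ℓ_t(p) = A log p + B log (1 - p)` with `A = ∑_t a`, `B = ∑_t b`, and
`(A + B) · KL(A / (A + B) ‖ p) = ℓ_t(A / (A + B)) - ℓ_t(p)`.
Since the Bernoulli KL divergence is nonnegative, `ℓ_t` is maximised at the pooled value, so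
`Q*(C)` is the sum of the maximised block terms. Merging `B₁` and `B₂` leaves the other blocks
unchanged and replaces `ℓ_{B₁}(p₁) + ℓ_{B₂}(p₂)` by `ℓ_{B₁}(p) + ℓ_{B₂}(p)` with the pooled
value `p` of `B₁ ∪ B₂`; the identity above turns each of the two differences into a KL term.
-/

open Finset Real

lemma sub_le_mul_log_div {x y : ℝ} (hx : 0 < x) (hy : 0 < y) : x - y ≤ x * log (x / y) := by
  have h := one_sub_inv_le_log_of_pos (div_pos hx hy)
  rw [inv_div] at h
  calc x - y = x * (1 - y / x) := by field_simp
    _ ≤ x * log (x / y) := mul_le_mul_of_nonneg_left h hx.le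

lemma klBer_nonneg {x y : ℝ} (hx : x ∈ Set.Ioo (0 : ℝ) 1) (hy : y ∈ Set.Ioo (0 : ℝ) 1) :
    0 ≤ klBer x y := by
  have h₀ := sub_le_mul_log_div hx.1 hy.1
  have h₁ := sub_le_mul_log_div (sub_pos.2 hx.2) (sub_pos.2 hy.2)
  unfold klBer
  linarith

lemma div_add_mem_Ioo {A B : ℝ} (hA : 0 < A) (hB : 0 < B) : A / (A + B) ∈ Set.Ioo (0 : ℝ) 1 :=
  ⟨by positivity, (div_lt_one (by positivity)).2 (by linarith)⟩

lemma mul_klBer_div_add {A B p : ℝ} (hA : 0 < A) (hB : 0 < B) (hp : p ∈ Set.Ioo (0 : ℝ) 1) :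
    (A + B) * klBer (A / (A + B)) p =
      (A * log (A / (A + B)) + B * log (1 - A / (A + B))) - (A * log p + B * log (1 - p)) := by
  set q := A / (A + B)
  have hq := div_add_mem_Ioo hA hB
  have hAq : (A + B) * q = A := mul_div_cancel₀ A (by positivity)
  have hBq : (A + B) * (1 - q) = B := by rw [mul_one_sub, hAq]; ring
  unfold klBer
  rw [log_div hq.1.ne' hp.1.ne', log_div (sub_pos.2 hq.2).ne' (sub_pos.2 hp.2).ne']
  linear_combination (log q - log p) * hAq + (log (1 - q) - log (1 - p)) * hBq

lemma Finpartition.sum_parts_sum {α M : Type*} [DecidableEq α] [AddCommMonoid M]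
    {s : Finset α} (P : Finpartition s) (f : α → M) :
    ∑ t ∈ P.parts, ∑ k ∈ t, f k = ∑ k ∈ s, f k := by
  have h := sum_biUnion (f := f) P.supIndep.pairwiseDisjoint
  rw [P.biUnion_parts] at h
  exact h.symm

lemma Finpartition.sum_parts_sub_sum_parts_merge {α M : Type*} [DecidableEq α] [AddCommGroup M]
    {s : Finset α} (C C'' : Finpartition s) {B₁ B₂ : Finset α} (hB₁ : B₁ ∈ C.parts)
    (hB₂ : B₂ ∈ C.parts) (hne : B₁ ≠ B₂)
    (hmerge : C''.parts = insert (B₁ ∪ B₂) ((C.parts.erase B₁).erase B₂)) (f : Finset α → M) :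
    ∑ t ∈ C.parts, f t - ∑ t ∈ C''.parts, f t = f B₁ + f B₂ - f (B₁ ∪ B₂) := by
  have hunion : B₁ ∪ B₂ ∉ (C.parts.erase B₁).erase B₂ := by
    intro h
    obtain ⟨hne₁, hmem⟩ := mem_erase.1 (mem_of_mem_erase h)
    obtain ⟨x, hx⟩ := C.nonempty_of_mem_parts hB₁
    exact hne₁ (C.eq_of_mem_parts hmem hB₁ (mem_union_left _ hx) hx)
  rw [hmerge, sum_insert hunion, ← add_sum_erase _ f hB₁,
    ← add_sum_erase _ f (mem_erase.2 ⟨hne.symm, hB₂⟩)]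
  abel

section BlockLogLik

variable {ι : Type*} (a b : ι → ℝ)

noncomputable def blockLogLik (t : Finset ι) (p : ℝ) : ℝ :=
  ∑ k ∈ t, (a k * log p + b k * log (1 - p))

lemma blockLogLik_eq (t : Finset ι) (p : ℝ) :
    blockLogLik a b t p = (∑ k ∈ t, a k) * log p + (∑ k ∈ t, b k) * log (1 - p) := by
  rw [blockLogLik, sum_add_distrib, sum_mul, sum_mul]

lemma sum_eq_blockLogLik_of_forall_eq {t : Finset ι} {β : ι → ℝ} {p : ℝ}
    (h : ∀ k ∈ t, β k = p) :
    ∑ k ∈ t, (a k * log (β k) + b k * log (1 - β k)) = blockLogLik a b t p :=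
  sum_congr rfl fun k hk => by rw [h k hk]

lemma blockLogLik_union [DecidableEq ι] {s t : Finset ι} (h : Disjoint s t) (p : ℝ) :
    blockLogLik a b (s ∪ t) p = blockLogLik a b s p + blockLogLik a b t p :=
  sum_union h

end BlockLogLik

section Pooled

variable {K : ℕ} {a b : Fin K → ℝ}

lemma pooled_eq_div_add (a b : Fin K → ℝ) (t : Finset (Fin K)) :
    pooled a b t = (∑ k ∈ t, a k) / ((∑ k ∈ t, a k) + ∑ k ∈ t, b k) := by
  rw [pooled, sum_add_distrib]

lemma pooled_mem_Ioo (ha : ∀ k, 0 < a k) (hb : ∀ k, 0 < b k) {t : Finset (Fin K)}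
    (ht : t.Nonempty) : pooled a b t ∈ Set.Ioo (0 : ℝ) 1 := by
  rw [pooled_eq_div_add]
  exact div_add_mem_Ioo (sum_pos (fun k _ => ha k) ht) (sum_pos (fun k _ => hb k) ht)

lemma mul_klBer_pooled (ha : ∀ k, 0 < a k) (hb : ∀ k, 0 < b k) {t : Finset (Fin K)}
    (ht : t.Nonempty) {p : ℝ} (hp : p ∈ Set.Ioo (0 : ℝ) 1) :
    (∑ k ∈ t, (a k + b k)) * klBer (pooled a b t) p =
      blockLogLik a b t (pooled a b t) - blockLogLik a b t p := by
  rw [blockLogLik_eq, blockLogLik_eq, pooled_eq_div_add, sum_add_distrib]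
  exact mul_klBer_div_add (sum_pos (fun k _ => ha k) ht) (sum_pos (fun k _ => hb k) ht) hp

lemma mul_klBer_pooled_nonneg (ha : ∀ k, 0 < a k) (hb : ∀ k, 0 < b k) {t : Finset (Fin K)}
    (ht : t.Nonempty) {p : ℝ} (hp : p ∈ Set.Ioo (0 : ℝ) 1) :
    0 ≤ (∑ k ∈ t, (a k + b k)) * klBer (pooled a b t) p :=
  mul_nonneg (sum_nonneg fun k _ => (add_pos (ha k) (hb k)).le)
    (klBer_nonneg (pooled_mem_Ioo ha hb ht) hp)

lemma blockLogLik_le_pooled (ha : ∀ k, 0 < a k) (hb : ∀ k, 0 < b k) {t : Finset (Fin K)}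
    (ht : t.Nonempty) {p : ℝ} (hp : p ∈ Set.Ioo (0 : ℝ) 1) :
    blockLogLik a b t p ≤ blockLogLik a b t (pooled a b t) := by
  linarith [mul_klBer_pooled ha hb ht hp, mul_klBer_pooled_nonneg ha hb ht hp]

end Pooled

section Qstar

variable {K : ℕ} {a b : Fin K → ℝ}

lemma isGreatest_image_Theta (ha : ∀ k, 0 < a k) (hb : ∀ k, 0 < b k)
    (C : Finpartition (univ : Finset (Fin K))) :
    IsGreatest ((fun β => ∑ k, (a k * log (β k) + b k * log (1 - β k))) '' Theta C)
      (∑ t ∈ C.parts, blockLogLik a b t (pooled a b t)) := by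
  constructor
  · refine ⟨fun k => pooled a b (C.part k), ⟨fun k => ?_, fun t ht g hg h hh => ?_⟩, ?_⟩
    · exact pooled_mem_Ioo ha hb (C.part_nonempty.2 (mem_univ k))
    · simp only [C.part_eq_of_mem ht hg, C.part_eq_of_mem ht hh]
    · dsimp only
      rw [← C.sum_parts_sum]
      exact sum_congr rfl fun t ht =>
        sum_eq_blockLogLik_of_forall_eq a b fun k hk => by rw [C.part_eq_of_mem ht hk]
  · rintro _ ⟨β, hβ, rfl⟩
    dsimp only
    rw [← C.sum_parts_sum]
    refine sum_le_sum fun t ht => ?_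
    obtain ⟨g, hg⟩ := C.nonempty_of_mem_parts ht
    rw [sum_eq_blockLogLik_of_forall_eq a b fun k hk => hβ.2 t ht k hk g hg]
    exact blockLogLik_le_pooled ha hb ⟨g, hg⟩ (hβ.1 g)

lemma Qstar_eq_sum_parts (ha : ∀ k, 0 < a k) (hb : ∀ k, 0 < b k)
    (C : Finpartition (univ : Finset (Fin K))) :
    Qstar a b C = ∑ t ∈ C.parts, blockLogLik a b t (pooled a b t) :=
  (isGreatest_image_Theta ha hb C).csSup_eq

end Qstar

theorem stmt18 {K : ℕ} (a b : Fin K → ℝ) (ha : ∀ k, 0 < a k) (hb : ∀ k, 0 < b k)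
    (C C'' : Finpartition (Finset.univ : Finset (Fin K)))
    (B1 B2 : Finset (Fin K)) (hB1 : B1 ∈ C.parts) (hB2 : B2 ∈ C.parts) (hne : B1 ≠ B2)
    (hmerge : C''.parts = insert (B1 ∪ B2) ((C.parts.erase B1).erase B2)) :
    Qstar a b C - Qstar a b C'' =
      (∑ k ∈ B1, (a k + b k)) * klBer (pooled a b B1) (pooled a b (B1 ∪ B2)) +
      (∑ k ∈ B2, (a k + b k)) * klBer (pooled a b B2) (pooled a b (B1 ∪ B2)) ∧
    0 ≤ Qstar a b C - Qstar a b C'' := by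
  have hn₁ := C.nonempty_of_mem_parts hB1
  have hn₂ := C.nonempty_of_mem_parts hB2
  have hp := pooled_mem_Ioo ha hb (hn₁.mono (subset_union_left (s₂ := B2)))
  have hdiff : Qstar a b C - Qstar a b C'' =
      (∑ k ∈ B1, (a k + b k)) * klBer (pooled a b B1) (pooled a b (B1 ∪ B2)) +
      (∑ k ∈ B2, (a k + b k)) * klBer (pooled a b B2) (pooled a b (B1 ∪ B2)) := by
    rw [Qstar_eq_sum_parts ha hb, Qstar_eq_sum_parts ha hb,
      C.sum_parts_sub_sum_parts_merge C'' hB1 hB2 hne hmerge,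
      blockLogLik_union a b (s := B1) (t := B2) (C.disjoint hB1 hB2 hne),
      mul_klBer_pooled ha hb hn₁ hp, mul_klBer_pooled ha hb hn₂ hp]
    ring
  exact ⟨hdiff, hdiff ▸ add_nonneg (mul_klBer_pooled_nonneg ha hb hn₁ hp)
    (mul_klBer_pooled_nonneg ha hb hn₂ hp)⟩
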